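/- arXiv:2402.07683 — 3 statements merged into one kernel-verified Lean document; each statement's English description precedes it below -/
import Mathlib

section
/- Let L, R be n×n real matrices and S ⊆ {1,…,n}, and suppose that for every q′ ∈ ℝ^n the Lin-Bellman system (L, R, q′, S) has exactly one solution. Then the matrix Î − R̂ is invertible, and the matrix M := (Î − L̂)(Î − R̂)^{-1} is a P-matrix. -/
/-- A vector `x` is a solution of the Lin-Bellman system `(L, R, q, S)`. -/
def LinBellmanSol {n : ℕ} (L R : Matrix (Fin n) (Fin n) ℝ) (q : Fin n → ℝ)
    (S : Finset (Fin n)) (x : Fin n → ℝ) : Prop :=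
  ∀ i : Fin n,
    x i = if i ∈ S then max ((L.mulVec x + q) i) (R.mulVec x i)
          else min ((L.mulVec x + q) i) (R.mulVec x i)

/-- `Â`: the matrix obtained from `A` by negating the rows with index not in `S`. -/
def hatMat {n : ℕ} (S : Finset (Fin n)) (A : Matrix (Fin n) (Fin n) ℝ) :
    Matrix (Fin n) (Fin n) ℝ :=
  Matrix.of fun i j => if i ∈ S then A i j else -A i j

/-- `M` is a P-matrix: every principal minor of `M` is positive. -/
def IsPMatrix {n : ℕ} (M : Matrix (Fin n) (Fin n) ℝ) : Prop :=
  ∀ s : Finset (Fin n), s.Nonempty →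
    0 < (M.submatrix (Subtype.val : {i // i ∈ s} → Fin n)
          (Subtype.val : {i // i ∈ s} → Fin n)).det


/-!
With `A = Î - L̂` and `B = Î - R̂`, the Lin-Bellman system `(L, R, q, S)` is the horizontal LCP
`min (A x - Î q, B x) = 0`, and `Î` is an involution, so this HLCP is uniquely solvable for every
right-hand side. A nonzero kernel vector `v` of `B` would give the two solutions `0` and `v` for a
sufficiently negative right-hand side, so `B` is invertible and `w = B x` turns the HLCP into the
LCP `min (M w - c, w) = 0`. If `M` reversed the sign of some `z ≠ 0`, then `z⁺` and `z⁻` would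
solve the same LCP; hence `M` reverses the sign of no nonzero vector. This property passes to
principal submatrices and to every convex combination of `1` and `M`, so the determinant of a
principal submatrix never vanishes on the segment from the identity and is therefore positive.
-/

open Matrix Function

section LCP

variable {ι κ : Type*} [Fintype ι]

/-- The horizontal linear complementarity problem `A x - c ≥ 0`, `B x ≥ 0`, `(A x - c) ⬝ (B x) = 0`,
written componentwise as `min = 0`. -/
def IsHLCPSolution (A B : Matrix ι ι ℝ) (c x : ι → ℝ) : Prop :=
  ∀ i, min ((A *ᵥ x) i - c i) ((B *ᵥ x) i) = 0

def NoSignReversal (M : Matrix ι ι ℝ) : Prop :=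
  ∀ z : ι → ℝ, z ≠ 0 → ∃ i, 0 < z i * (M *ᵥ z) i

theorem isUnit_of_existsUnique_isHLCPSolution [DecidableEq ι] {A B : Matrix ι ι ℝ}
    (h : ∀ c, ∃! x, IsHLCPSolution A B c x) : IsUnit B := by
  rw [isUnit_iff_isUnit_det, isUnit_iff_ne_zero, Ne, ← exists_mulVec_eq_zero_iff]
  rintro ⟨v, hv, hBv⟩
  have hsol : ∀ x, B *ᵥ x = 0 → (fun i => min 0 ((A *ᵥ v) i)) ≤ A *ᵥ x →
      IsHLCPSolution A B (fun i => min 0 ((A *ᵥ v) i)) x := fun x hBx hc i => by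
    rw [hBx]
    exact min_eq_right (sub_nonneg.2 (hc i))
  refine hv ((h _).unique (hsol v hBv fun i => min_le_right _ _) (hsol 0 ?_ fun i => ?_))
  · exact mulVec_zero B
  · simp

theorem isHLCPSolution_inv_mulVec_iff [DecidableEq ι] {A B : Matrix ι ι ℝ} (hB : IsUnit B)
    (c w : ι → ℝ) : IsHLCPSolution A B c (B⁻¹ *ᵥ w) ↔ IsHLCPSolution (A * B⁻¹) 1 c w := by
  simp only [IsHLCPSolution, mulVec_mulVec, mul_nonsing_inv B ((isUnit_iff_isUnit_det B).1 hB),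
    one_mulVec]

theorem existsUnique_isHLCPSolution_iff [DecidableEq ι] {A B : Matrix ι ι ℝ} (hB : IsUnit B)
    (c : ι → ℝ) :
    (∃! x, IsHLCPSolution A B c x) ↔ ∃! w, IsHLCPSolution (A * B⁻¹) 1 c w := by
  have hinv : IsUnit B⁻¹ := isUnit_nonsing_inv_iff.2 hB
  have hbij : Bijective (B⁻¹ *ᵥ ·) :=
    ⟨mulVec_injective_iff_isUnit.2 hinv, mulVec_surjective_iff_isUnit.2 hinv⟩
  rw [hbij.existsUnique_iff]
  exact existsUnique_congr (isHLCPSolution_inv_mulVec_iff hB c)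

theorem isHLCPSolution_one_posPart [DecidableEq ι] {M : Matrix ι ι ℝ} {z : ι → ℝ}
    (hz : ∀ i, z i * (M *ᵥ z) i ≤ 0) :
    IsHLCPSolution M 1 (fun i => min ((M *ᵥ z⁺) i) ((M *ᵥ z⁻) i)) z⁺ := by
  intro i
  rw [one_mulVec, Pi.posPart_apply]
  rcases le_or_gt (z i) 0 with hzi | hzi
  · rw [posPart_eq_zero.2 hzi]
    exact min_eq_right (sub_nonneg.2 (min_le_left _ _))
  · have hMz : (M *ᵥ z) i = (M *ᵥ z⁺) i - (M *ᵥ z⁻) i := by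
      rw [← Pi.sub_apply, ← mulVec_sub, posPart_sub_negPart]
    have hle : (M *ᵥ z⁺) i ≤ (M *ᵥ z⁻) i := by
      have := nonpos_of_mul_nonpos_right (hz i) hzi
      linarith
    dsimp only
    rw [min_eq_left hle, sub_self]
    exact min_eq_left (posPart_nonneg _)

theorem noSignReversal_of_existsUnique_isHLCPSolution [DecidableEq ι] {M : Matrix ι ι ℝ}
    (h : ∀ c, ∃! w, IsHLCPSolution M 1 c w) : NoSignReversal M := by
  intro z hz
  by_contra! hrev
  have hpos := isHLCPSolution_one_posPart hrev
  have hneg : IsHLCPSolution M 1 (fun i => min ((M *ᵥ z⁺) i) ((M *ᵥ z⁻) i)) z⁻ := by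
    simpa only [posPart_neg, negPart_neg, min_comm] using
      isHLCPSolution_one_posPart (z := -z) (by simpa [mulVec_neg] using hrev)
  exact hz (by rw [← posPart_sub_negPart z, (h _).unique hpos hneg, sub_self])

theorem NoSignReversal.submatrix [Fintype κ] {M : Matrix ι ι ℝ} (h : NoSignReversal M)
    {e : κ → ι} (he : Injective e) : NoSignReversal (M.submatrix e e) := by
  intro y hy
  set z := extend e y 0
  have hz_e : ∀ k, z (e k) = y k := he.extend_apply y 0
  have hz_out : ∀ i ∉ Set.range e, z i = 0 := fun i hi => extend_apply' y (0 : ι → ℝ) i hi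
  have hMz : ∀ k, (M *ᵥ z) (e k) = (M.submatrix e e *ᵥ y) k := fun k =>
    (Fintype.sum_of_injective e he _ _ (fun j hj => by rw [hz_out j hj, mul_zero])
      (fun k' => by dsimp only; rw [hz_e, submatrix_apply])).symm
  have hz : z ≠ 0 := fun h0 => hy (funext fun k => by rw [← hz_e, h0, Pi.zero_apply, Pi.zero_apply])
  obtain ⟨i, hi⟩ := h z hz
  obtain ⟨k, rfl⟩ : i ∈ Set.range e := by
    by_contra hout
    rw [hz_out i hout, zero_mul] at hi
    exact lt_irrefl 0 hi
  exact ⟨k, by rwa [hz_e, hMz] at hi⟩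

theorem NoSignReversal.segment_from_one [DecidableEq ι] {N : Matrix ι ι ℝ}
    (h : NoSignReversal N) {t : ℝ} (ht : t ∈ Set.Icc (0 : ℝ) 1) :
    NoSignReversal ((1 - t) • (1 : Matrix ι ι ℝ) + t • N) := by
  intro z hz
  obtain ⟨i, hi⟩ := h z hz
  refine ⟨i, ?_⟩
  simp only [add_mulVec, smul_mulVec, one_mulVec, Pi.add_apply, Pi.smul_apply, smul_eq_mul]
  rcases ht.2.eq_or_lt with rfl | ht1
  · simpa using hi
  · have hzi : z i ≠ 0 := by rintro h0; rw [h0, zero_mul] at hi; exact lt_irrefl 0 hi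
    nlinarith [mul_pos (sub_pos.2 ht1) (mul_self_pos.2 hzi), mul_nonneg ht.1 hi.le]

theorem NoSignReversal.det_ne_zero [DecidableEq ι] {N : Matrix ι ι ℝ} (h : NoSignReversal N) :
    N.det ≠ 0 := by
  rw [Ne, ← exists_mulVec_eq_zero_iff]
  rintro ⟨v, hv, hNv⟩
  obtain ⟨i, hi⟩ := h v hv
  rw [hNv, Pi.zero_apply, mul_zero] at hi
  exact lt_irrefl 0 hi

theorem NoSignReversal.det_pos [DecidableEq ι] {N : Matrix ι ι ℝ} (h : NoSignReversal N) :
    0 < N.det := by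
  set f : ℝ → ℝ := fun t => ((1 - t) • (1 : Matrix ι ι ℝ) + t • N).det
  have hf : Continuous f := by fun_prop
  by_contra! hle
  obtain ⟨t, ht, hft⟩ : ∃ t ∈ Set.Icc (0 : ℝ) 1, f t = 0 :=
    intermediate_value_Icc' zero_le_one hf.continuousOn ⟨by simpa [f] using hle, by simp [f]⟩
  exact (h.segment_from_one ht).det_ne_zero hft

end LCP

theorem isPMatrix_of_noSignReversal {n : ℕ} {M : Matrix (Fin n) (Fin n) ℝ}
    (h : NoSignReversal M) : IsPMatrix M :=
  fun _ _ => (h.submatrix Subtype.val_injective).det_pos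

section LinBellman

variable {n : ℕ} (S : Finset (Fin n))

theorem hatMat_mulVec_apply (A : Matrix (Fin n) (Fin n) ℝ) (v : Fin n → ℝ) (i : Fin n) :
    (hatMat S A *ᵥ v) i = if i ∈ S then (A *ᵥ v) i else -(A *ᵥ v) i := by
  simp only [hatMat, mulVec, dotProduct, of_apply]
  split_ifs <;> simp [neg_mul, Finset.sum_neg_distrib]

theorem hatMat_one_mulVec_hatMat_one_mulVec (v : Fin n → ℝ) :
    hatMat S 1 *ᵥ (hatMat S 1 *ᵥ v) = v := by
  funext i
  by_cases hi : i ∈ S <;> simp [hatMat_mulVec_apply, hi]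

theorem linBellmanSol_iff_isHLCPSolution (L R : Matrix (Fin n) (Fin n) ℝ) (q x : Fin n → ℝ) :
    LinBellmanSol L R q S x ↔
      IsHLCPSolution (hatMat S 1 - hatMat S L) (hatMat S 1 - hatMat S R) (hatMat S 1 *ᵥ q) x := by
  refine forall_congr' fun i => ?_
  simp only [sub_mulVec, Pi.sub_apply, Pi.add_apply, hatMat_mulVec_apply, one_mulVec]
  split_ifs
  · rw [← sub_eq_zero, ← min_sub_sub_left, sub_sub]
  · rw [eq_comm, ← sub_eq_zero, ← min_sub_sub_right]
    ring_nf

end LinBellman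

/-- If for every `q'` the Lin-Bellman system `(L, R, q', S)` has exactly one solution,
then `Î - R̂` is invertible and `M := (Î - L̂)(Î - R̂)⁻¹` is a P-matrix. -/
theorem linBellman_unique_imp_pmatrix {n : ℕ}
    (L R : Matrix (Fin n) (Fin n) ℝ) (S : Finset (Fin n))
    (huniq : ∀ q' : Fin n → ℝ, ∃! x : Fin n → ℝ, LinBellmanSol L R q' S x) :
    IsUnit (hatMat S 1 - hatMat S R) ∧
      IsPMatrix ((hatMat S 1 - hatMat S L) * (hatMat S 1 - hatMat S R)⁻¹) := by
  have hHLCP : ∀ c, ∃! x,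
      IsHLCPSolution (hatMat S 1 - hatMat S L) (hatMat S 1 - hatMat S R) c x := by
    intro c
    simpa only [linBellmanSol_iff_isHLCPSolution, hatMat_one_mulVec_hatMat_one_mulVec] using
      huniq (hatMat S 1 *ᵥ c)
  have hB := isUnit_of_existsUnique_isHLCPSolution hHLCP
  exact ⟨hB, isPMatrix_of_noSignReversal <| noSignReversal_of_existsUnique_isHLCPSolution
    fun c => (existsUnique_isHLCPSolution_iff hB c).1 (hHLCP c)⟩
end

section
/- Let d ≥ 1 and for each i ∈ {1,…,d} let P_i = {p_{i,0}, p_{i,1}} ⊂ ℝ^d be a two-point set. Assume the sets P_1,…,P_d are well-separated, and assume general position in the sense that for every colorful selection v ∈ {0,1}^d (selecting p_{i,v_i} from P_i) and every i ∈ {1,…,d}, D_v(p_{i, 1−v_i}) ≠ 0, where D_v := D_{(p_{1,v_1},…,p_{d,v_d})}. Let α_1,…,α_d ∈ {1, 2}. Define an orientation O of the d-dimensional hypercube with vertex set {0,1}^d by: O(v)_i := 0 if |{j ∈ {0,1} : D_v(p_{i,j}) ≥ 0}| = α_i, and O(v)_i := 1 otherwise. Then O is a unique sink orientation: for every pair of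 vertices a ≤ b (componentwise) in {0,1}^d, there is exactly one vertex v with a ≤ v ≤ b such that O(v)_i = 0 for every i with a_i ≠ b_i. -/
open scoped Matrix

/-- `D_p x`: the determinant of the `d × d` matrix whose `i`-th row is `p i - x`. -/
noncomputable def Dmap {d : ℕ} (p : Fin d → (Fin d → ℝ)) (x : Fin d → ℝ) : ℝ :=
  Matrix.det (Matrix.of fun i j => p i j - x j)

/-- Point sets `P 0, …, P (k-1)` in `ℝ^d` are well-separated: no affine subspace
of dimension at most `k - 2` intersects every convex hull `conv (P i)`. -/
def WellSeparated {d k : ℕ} (P : Fin k → Set (Fin d → ℝ)) : Prop :=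
  ¬ ∃ F : AffineSubspace ℝ (Fin d → ℝ),
      (Module.finrank ℝ F.direction : ℤ) ≤ (k : ℤ) - 2 ∧
      ∀ i, ((F : Set (Fin d → ℝ)) ∩ convexHull ℝ (P i)).Nonempty

/-!
Write `ν_v` for the normal vector of the hyperplane through the lifted points `(1, p_{i,v_i})`,
so that `D_v x = ν_v ⬝ᵥ (1, x)`. Well-separation says exactly that lifted points chosen one from
each segment `conv P_i` are linearly independent. By the Szabó–Welzl criterion it suffices that two
distinct vertices `v, w` differ in some coordinate `i` where `D_v (p_{i,w_i})` and `D_w (p_{i,v_i})`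
have opposite signs. If instead they had the same sign for every such `i`, follow the pencil
`h τ = (1 - τ) ν_v - τ ν_w`, `τ ∈ [0, 1]`, with rows
`r_i τ = (1 - τ) a_i (1, p_{i,v_i}) + τ b_i (1, p_{i,w_i})`, where `a_i = D_v (p_{i,w_i})` and
`b_i = D_w (p_{i,v_i})` make `r_i τ` orthogonal to `h τ`. Since `a_i b_i > 0` the rows stay
independent, so `det (h τ; r τ)` never vanishes; yet it equals `(∏ a_i) |ν_v|² > 0` at `τ = 0` and
`-(∏ b_i) |ν_w|² < 0` at `τ = 1`.
-/

open Matrix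

theorem mul_pos_of_ne_zero_on_Icc {f : ℝ → ℝ} {a b : ℝ} (hab : a ≤ b)
    (hf : ContinuousOn f (Set.Icc a b)) (hne : ∀ x ∈ Set.Icc a b, f x ≠ 0) : 0 < f a * f b := by
  by_contra! hle
  have h0 : (0 : ℝ) ∈ Set.uIcc (f a) (f b) := by
    rw [Set.mem_uIcc]
    rcases mul_nonpos_iff.mp hle with h | h
    · exact Or.inr ⟨h.2, h.1⟩
    · exact Or.inl ⟨h.1, h.2⟩
  rw [← Set.uIcc_of_le hab] at hf hne
  obtain ⟨x, hx, hfx⟩ := intermediate_value_uIcc hf h0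
  exact hne x hx hfx

theorem one_sub_mul_add_mul_ne_zero {a b τ : ℝ} (hab : 0 < a * b) (hτ : τ ∈ Set.Icc (0 : ℝ) 1) :
    (1 - τ) * a + τ * b ≠ 0 := by
  obtain ⟨hτ₀, hτ₁⟩ := hτ
  rcases hτ₁.eq_or_lt with rfl | hτ₁
  · simpa using (mul_ne_zero_iff.mp hab.ne').2
  rcases mul_pos_iff.mp hab with ⟨ha, hb⟩ | ⟨ha, hb⟩
  · exact (by nlinarith : 0 < (1 - τ) * a + τ * b).ne'
  · exact (by nlinarith : (1 - τ) * a + τ * b < 0).ne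

namespace Matrix

variable {d : ℕ}

/-- The generalized cross product of the rows `r`. -/
def crossVec (r : Fin d → Fin (d + 1) → ℝ) : Fin (d + 1) → ℝ :=
  fun j => (-1) ^ (j : ℕ) * det (of fun i k => r i (j.succAbove k))

theorem det_of_cons_eq_crossVec_dotProduct (x : Fin (d + 1) → ℝ) (r : Fin d → Fin (d + 1) → ℝ) :
    det (of (Fin.cons x r)) = crossVec r ⬝ᵥ x := by
  rw [det_succ_row_zero, dotProduct]
  refine Finset.sum_congr rfl fun j _ => ?_
  change _ * x j * det (of fun i k => r i (j.succAbove k)) = _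
  simp only [crossVec]
  ring

theorem crossVec_dotProduct_row (r : Fin d → Fin (d + 1) → ℝ) (i : Fin d) :
    crossVec r ⬝ᵥ r i = 0 := by
  rw [← det_of_cons_eq_crossVec_dotProduct]
  exact det_zero_of_row_eq (Fin.succ_ne_zero i).symm rfl

theorem det_of_cons_smul (c : ℝ) (x : Fin (d + 1) → ℝ) (a : Fin d → ℝ)
    (r : Fin d → Fin (d + 1) → ℝ) :
    det (of (Fin.cons (c • x) fun i => a i • r i)) = (c * ∏ i, a i) * det (of (Fin.cons x r)) := by
  have : of (Fin.cons (c • x) fun i => a i • r i) =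
      of fun i j => (Fin.cons c a : Fin (d + 1) → ℝ) i * of (Fin.cons x r) i j := by
    ext i j
    cases i using Fin.cases <;> simp
  rw [this, det_mul_column, Fin.prod_cons]

theorem eq_zero_of_det_of_cons_eq_zero {r : Fin d → Fin (d + 1) → ℝ} (hr : LinearIndependent ℝ r)
    {h : Fin (d + 1) → ℝ} (horth : ∀ i, h ⬝ᵥ r i = 0) (hdet : det (of (Fin.cons h r)) = 0) :
    h = 0 := by
  obtain ⟨c, hc⟩ : ∃ c : Fin d → ℝ, ∑ i, c i • r i = h := by
    rw [← Submodule.mem_span_range_iff_exists_fun]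
    by_contra hh
    have hunit : IsUnit (of (Fin.cons h r)) :=
      linearIndependent_rows_iff_isUnit.mp (linearIndependent_finCons.mpr ⟨hr, hh⟩)
    rw [isUnit_iff_isUnit_det, hdet] at hunit
    exact not_isUnit_zero hunit
  apply dotProduct_self_eq_zero.mp
  calc h ⬝ᵥ h = h ⬝ᵥ ∑ i, c i • r i := by rw [hc]
    _ = 0 := by simp [dotProduct_sum, horth]

theorem det_of_cons_mul_det_of_cons_pos {H : ℝ → Fin (d + 1) → ℝ}
    {R : ℝ → Fin d → Fin (d + 1) → ℝ} (hH : Continuous H) (hR : Continuous R)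
    (hind : ∀ τ ∈ Set.Icc (0 : ℝ) 1, LinearIndependent ℝ (R τ))
    (horth : ∀ τ ∈ Set.Icc (0 : ℝ) 1, ∀ i, H τ ⬝ᵥ R τ i = 0)
    (hne : ∀ τ ∈ Set.Icc (0 : ℝ) 1, H τ ≠ 0) :
    0 < det (of (Fin.cons (H 0) (R 0))) * det (of (Fin.cons (H 1) (R 1))) := by
  refine mul_pos_of_ne_zero_on_Icc zero_le_one ?_ fun τ hτ hdet =>
    hne τ hτ (eq_zero_of_det_of_cons_eq_zero (hind τ hτ) (horth τ hτ) hdet)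
  exact (Continuous.matrix_det (hH.finCons hR)).continuousOn

theorem eq_of_crossVec_dotProduct_mul_pos {q₀ q₁ : Fin d → Fin (d + 1) → ℝ}
    (hind : ∀ s t : Fin d → ℝ, (∀ i, 0 ≤ s i * t i ∧ s i + t i ≠ 0) →
      LinearIndependent ℝ fun i => s i • q₀ i + t i • q₁ i)
    (hpos : ∀ i, q₀ i ≠ q₁ i → 0 < (crossVec q₀ ⬝ᵥ q₁ i) * (crossVec q₁ ⬝ᵥ q₀ i)) :
    q₀ = q₁ := by
  by_contra hne
  obtain ⟨i₀, hi₀⟩ := Function.ne_iff.mp hne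
  set ν₀ := crossVec q₀
  set ν₁ := crossVec q₁
  have hν₀ : ∀ i, ν₀ ⬝ᵥ q₀ i = 0 := crossVec_dotProduct_row q₀
  have hν₁ : ∀ i, ν₁ ⬝ᵥ q₁ i = 0 := crossVec_dotProduct_row q₁
  obtain ⟨hA₀, hB₀⟩ := mul_ne_zero_iff.mp (hpos i₀ hi₀).ne'
  -- On rows with `q₀ i = q₁ i` both dot products vanish, so any positive coefficients will do.
  let a : Fin d → ℝ := fun i => if q₀ i = q₁ i then 1 else ν₀ ⬝ᵥ q₁ i
  let b : Fin d → ℝ := fun i => if q₀ i = q₁ i then 1 else ν₁ ⬝ᵥ q₀ i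
  have hab : ∀ i, 0 < a i * b i := by
    intro i
    by_cases h : q₀ i = q₁ i <;> simp [a, b, h, hpos i]
  have hcoeff : ∀ i, b i * (ν₀ ⬝ᵥ q₁ i) = a i * (ν₁ ⬝ᵥ q₀ i) := by
    intro i
    by_cases h : q₀ i = q₁ i
    · rw [← h, hν₀, (h ▸ hν₁ i : ν₁ ⬝ᵥ q₀ i = 0), mul_zero, mul_zero]
    · simp only [a, b, if_neg h]
      ring
  let H : ℝ → Fin (d + 1) → ℝ := fun τ => (1 - τ) • ν₀ - τ • ν₁
  let R : ℝ → Fin d → Fin (d + 1) → ℝ := fun τ i => ((1 - τ) * a i) • q₀ i + (τ * b i) • q₁ i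
  have hR : ∀ τ ∈ Set.Icc (0 : ℝ) 1, LinearIndependent ℝ (R τ) := fun τ hτ =>
    hind _ _ fun i => ⟨by nlinarith [mul_nonneg (mul_nonneg hτ.1 (sub_nonneg.mpr hτ.2)) (hab i).le],
      one_sub_mul_add_mul_ne_zero (hab i) hτ⟩
  have horth : ∀ τ i, H τ ⬝ᵥ R τ i = 0 := by
    intro τ i
    simp only [H, R, sub_dotProduct, dotProduct_add, smul_dotProduct, dotProduct_smul, hν₀, hν₁,
      smul_eq_mul]
    linear_combination (1 - τ) * τ * hcoeff i
  have hH : ∀ τ ∈ Set.Icc (0 : ℝ) 1, H τ ≠ 0 := by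
    intro τ _ hH
    have h₁ := congrArg (· ⬝ᵥ q₁ i₀) hH
    have h₀ := congrArg (· ⬝ᵥ q₀ i₀) hH
    simp only [H, sub_dotProduct, smul_dotProduct, hν₀, hν₁, smul_eq_mul, zero_dotProduct,
      mul_zero, sub_zero, zero_sub, neg_eq_zero, mul_eq_zero] at h₀ h₁
    rcases h₀ with rfl | h₀
    · norm_num [hA₀] at h₁
    · exact hB₀ h₀
  have h0 : det (of (Fin.cons (H 0) (R 0))) = (∏ i, a i) * (ν₀ ⬝ᵥ ν₀) := by
    simpa [H, R, det_of_cons_eq_crossVec_dotProduct] using det_of_cons_smul 1 ν₀ a q₀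
  have h1 : det (of (Fin.cons (H 1) (R 1))) = -(∏ i, b i) * (ν₁ ⬝ᵥ ν₁) := by
    simpa [H, R, det_of_cons_eq_crossVec_dotProduct] using det_of_cons_smul (-1) ν₁ b q₁
  have hsq₀ : 0 < ν₀ ⬝ᵥ ν₀ := by
    simpa using dotProduct_star_self_pos_iff.mpr fun h : ν₀ = 0 => hA₀ (by rw [h, zero_dotProduct])
  have hsq₁ : 0 < ν₁ ⬝ᵥ ν₁ := by
    simpa using dotProduct_star_self_pos_iff.mpr fun h : ν₁ = 0 => hB₀ (by rw [h, zero_dotProduct])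
  have hprod : 0 < (∏ i, a i) * ∏ i, b i := by
    rw [← Finset.prod_mul_distrib]
    exact Finset.prod_pos fun i _ => hab i
  have hpath := det_of_cons_mul_det_of_cons_pos (by fun_prop) (by fun_prop) hR
    (fun τ _ => horth τ) hH
  rw [h0, h1] at hpath
  nlinarith [mul_pos hprod (mul_pos hsq₀ hsq₁)]

end Matrix

def liftOne {n : ℕ} (x : Fin n → ℝ) : Fin (n + 1) → ℝ := Fin.cons 1 x

theorem liftOne_injective {n : ℕ} : Function.Injective (liftOne (n := n)) :=
  Fin.cons_right_injective (α := fun _ => ℝ) 1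

theorem Dmap_eq_det_liftOne {d : ℕ} (p : Fin d → Fin d → ℝ) (x : Fin d → ℝ) :
    Dmap p x = det (of (Fin.cons (liftOne x) fun i => liftOne (p i))) := by
  rw [det_eq_of_forall_row_eq_smul_add_const (fun i => if i = 0 then 0 else 1) 0 (by simp)
    (B := of (Fin.cons (liftOne x) fun i => Fin.cons 0 (p i - x))) ?_]
  · rw [det_succ_column_zero, Fin.sum_univ_succ]
    simp [Dmap, liftOne, submatrix]
  · intro i j
    cases i using Fin.cases <;> cases j using Fin.cases <;> simp [liftOne, Fin.succ_ne_zero]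

theorem Dmap_eq_crossVec_dotProduct {d : ℕ} (p : Fin d → Fin d → ℝ) (x : Fin d → ℝ) :
    Dmap p x = crossVec (fun i => liftOne (p i)) ⬝ᵥ liftOne x := by
  rw [Dmap_eq_det_liftOne, det_of_cons_eq_crossVec_dotProduct]

theorem Dmap_self {d : ℕ} (x : Fin d → Fin d → ℝ) (i : Fin d) : Dmap x (x i) = 0 :=
  det_eq_zero_of_row_eq_zero i fun j => by simp

theorem exists_mem_segment_smul_liftOne_add {n : ℕ} (x y : Fin n → ℝ) {s t : ℝ}
    (hst : 0 ≤ s * t) (hsum : s + t ≠ 0) :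
    ∃ z ∈ segment ℝ x y, s • liftOne x + t • liftOne y = (s + t) • liftOne z := by
  have hweight : ∀ u, 0 ≤ u * (s + t) → 0 ≤ u / (s + t) := fun u hu => by
    rw [← mul_div_mul_right u _ hsum]
    exact div_nonneg hu (mul_self_nonneg _)
  have hs := hweight s (by nlinarith [mul_self_nonneg s])
  have ht := hweight t (by nlinarith [mul_self_nonneg t])
  refine ⟨(s / (s + t)) • x + (t / (s + t)) • y, ⟨_, _, hs, ht, by field_simp, rfl⟩, ?_⟩
  funext j
  cases j using Fin.cases <;> simp [liftOne]; field_simp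

theorem AffineIndependent.linearIndependent_liftOne {ι : Type*} [Fintype ι] {n : ℕ}
    {c : ι → Fin n → ℝ} (hc : AffineIndependent ℝ c) :
    LinearIndependent ℝ fun i => liftOne (c i) := by
  rw [Fintype.linearIndependent_iff]
  intro g hg
  have hsum : ∑ i, g i = 0 := by simpa [liftOne, Finset.sum_apply] using congrFun hg 0
  have hpt : ∑ i, g i • c i = 0 := by
    funext k
    simpa [liftOne, Finset.sum_apply] using congrFun hg k.succ
  exact fun i => hc.eq_zero_of_sum_eq_zero hsum hpt i (Finset.mem_univ i)

theorem WellSeparated.mono {k n : ℕ} {P Q : Fin k → Set (Fin n → ℝ)} (hP : WellSeparated P)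
    (hQP : ∀ i, Q i ⊆ P i) : WellSeparated Q := fun ⟨F, hdim, hF⟩ =>
  hP ⟨F, hdim, fun i => (hF i).mono (Set.inter_subset_inter_right _ (convexHull_mono (hQP i)))⟩

theorem WellSeparated.affineIndependent {k n : ℕ} {P : Fin k → Set (Fin n → ℝ)}
    (hP : WellSeparated P) {c : Fin k → Fin n → ℝ} (hc : ∀ i, c i ∈ convexHull ℝ (P i)) :
    AffineIndependent ℝ c := by
  by_cases hk : 2 ≤ k
  · by_contra hdep
    have hrank := (finrank_vectorSpan_le_iff_not_affineIndependent ℝ c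
      (n := k - 2) (by simp; omega)).mpr hdep
    refine hP ⟨affineSpan ℝ (Set.range c), ?_, fun i => ⟨c i, ?_, hc i⟩⟩
    · rw [direction_affineSpan]
      omega
    · exact subset_affineSpan ℝ _ ⟨i, rfl⟩
  · have : Subsingleton (Fin k) := Fin.subsingleton_iff_le_one.mpr (by omega)
    exact affineIndependent_of_subsingleton ℝ c

theorem WellSeparated.linearIndependent_smul_liftOne_add {k n : ℕ} {x y : Fin k → Fin n → ℝ}
    (hP : WellSeparated fun i => ({x i, y i} : Set (Fin n → ℝ))) {s t : Fin k → ℝ}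
    (hst : ∀ i, 0 ≤ s i * t i ∧ s i + t i ≠ 0) :
    LinearIndependent ℝ fun i => s i • liftOne (x i) + t i • liftOne (y i) := by
  choose z hz hrow using fun i =>
    exists_mem_segment_smul_liftOne_add (x i) (y i) (hst i).1 (hst i).2
  have hind : LinearIndependent ℝ fun i => (s i + t i) • liftOne (z i) :=
    (hP.affineIndependent fun i => by rw [convexHull_pair]; exact hz i
      ).linearIndependent_liftOne.units_smul fun i => Units.mk0 _ (hst i).2
  simpa only [hrow] using hind

theorem WellSeparated.exists_Dmap_mul_Dmap_nonpos {d : ℕ} {x y : Fin d → Fin d → ℝ}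
    (hxy : WellSeparated fun i => ({x i, y i} : Set (Fin d → ℝ))) (hne : x ≠ y) :
    ∃ i, x i ≠ y i ∧ Dmap x (y i) * Dmap y (x i) ≤ 0 := by
  by_contra! hpos
  have hlift : (fun i => liftOne (x i)) = fun i => liftOne (y i) := by
    refine eq_of_crossVec_dotProduct_mul_pos (fun s t => hxy.linearIndependent_smul_liftOne_add)
      fun i hi => ?_
    simpa only [Dmap_eq_crossVec_dotProduct] using hpos i fun h => hi (by rw [h])
  exact hne (funext fun i => liftOne_injective (congrFun hlift i))

/-- `s v i = true` says that the edge of the cube `ι → Bool` at `v` in direction `i` is incoming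
at `v`. The condition is the Szabó–Welzl characterization of unique sink orientations. -/
def Cube.IsUSO {ι : Type*} (s : (ι → Bool) → ι → Bool) : Prop :=
  ∀ v w, v ≠ w → ∃ i, v i ≠ w i ∧ s v i ≠ s w i

theorem Cube.IsUSO.existsUnique_sink {ι : Type*} [Finite ι] {s : (ι → Bool) → ι → Bool}
    (hs : Cube.IsUSO s) {a b : ι → Bool} (hab : ∀ i, a i ≤ b i) :
    ∃! v : ι → Bool, (∀ i, a i ≤ v i ∧ v i ≤ b i) ∧ ∀ i, a i ≠ b i → s v i = true := by
  let e : (ι → Bool) → ι → Bool := fun u i => if a i = b i then a i else u i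
  -- The outmap of the face `e`, padded by the identity in the fixed coordinates: an injective,
  -- hence surjective, self-map of the finite cube.
  let Φ : (ι → Bool) → ι → Bool := fun u i => if a i = b i then u i else s (e u) i
  have hΦ : Function.Injective Φ := by
    intro u u' huu'
    have he : e u = e u' := by
      by_contra hne
      obtain ⟨i, hi, hsi⟩ := hs _ _ hne
      by_cases h : a i = b i
      · simp [e, h] at hi
      · simpa [Φ, h] using hsi (by simpa [Φ, h] using congrFun huu' i)
    funext i
    by_cases h : a i = b i
    · simpa [Φ, h] using congrFun huu' i
    · simpa [e, h] using congrFun he i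
  obtain ⟨u, hu⟩ := Finite.injective_iff_surjective.mp hΦ fun _ => true
  refine ⟨e u, ⟨fun i => ?_, fun i hi => by simpa [Φ, hi] using congrFun hu i⟩, ?_⟩
  · by_cases h : a i = b i
    · simp [e, h]
    · have := hab i
      revert h this
      cases a i <;> cases b i <;> cases u i <;> simp [e]
  · rintro v ⟨hv, hsink⟩
    by_contra hne
    obtain ⟨i, hi, hsi⟩ := hs _ _ hne
    have hab' : a i ≠ b i := by
      intro h
      have hvi : v i = a i := le_antisymm ((hv i).2.trans_eq h.symm) (hv i).1
      exact hi (by simp [e, h, hvi])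
    have hsink_u : s (e u) i = true := by simpa [Φ, hab'] using congrFun hu i
    exact hsi ((hsink i hab').trans hsink_u.symm)

theorem card_filter_nonneg_of_eq_zero {f : Bool → ℝ} {b : Bool} (hb : f b = 0) :
    (Finset.univ.filter fun j => 0 ≤ f j).card = if 0 ≤ f (!b) then 2 else 1 := by
  rw [Finset.card_filter, Fintype.sum_bool]
  cases b <;> split_ifs <;> simp_all <;> linarith

theorem isUSO_card_filter_nonneg_Dmap_eq {d : ℕ} {p : Fin d → Bool → Fin d → ℝ}
    (hws : WellSeparated fun i => ({p i false, p i true} : Set (Fin d → ℝ)))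
    (hgp : ∀ (v : Fin d → Bool) (i : Fin d), Dmap (fun j => p j (v j)) (p i (!v i)) ≠ 0)
    {α : Fin d → ℕ} (hα : ∀ i, α i = 1 ∨ α i = 2) :
    Cube.IsUSO fun v i =>
      decide ((Finset.univ.filter fun j : Bool => 0 ≤ Dmap (fun l => p l (v l)) (p i j)).card
        = α i) := by
  intro v w hvw
  have hsep : ∀ (u : Fin d → Bool) i, p i (!u i) ≠ p i (u i) := fun u i h =>
    hgp u i (by rw [h]; exact Dmap_self _ i)
  have hsub : ∀ (u u' : Fin d → Bool) i,
      ({p i (u i), p i (u' i)} : Set (Fin d → ℝ)) ⊆ {p i false, p i true} := by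
    intro u u' i
    cases u i <;> cases u' i <;> simp [Set.insert_subset_iff]
  have hne : (fun l => p l (v l)) ≠ fun l => p l (w l) := by
    obtain ⟨i, hi⟩ := Function.ne_iff.mp hvw
    exact fun h => hsep v i (by rw [← Bool.eq_not.mpr (Ne.symm hi)]; exact (congrFun h i).symm)
  obtain ⟨i, hi, hle⟩ := (hws.mono (hsub v w)).exists_Dmap_mul_Dmap_nonpos hne
  have hvi : v i ≠ w i := fun h => hi (by simp [h])
  have hw : w i = !v i := Bool.eq_not.mpr hvi.symm
  have hv : v i = !w i := Bool.eq_not.mpr hvi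
  refine ⟨i, hvi, ?_⟩
  have hlt : Dmap (fun l => p l (v l)) (p i (w i)) * Dmap (fun l => p l (w l)) (p i (v i)) < 0 := by
    refine hle.lt_of_ne (mul_ne_zero ?_ ?_)
    · rw [hw]; exact hgp v i
    · rw [hv]; exact hgp w i
  rw [ne_eq, decide_eq_decide,
    card_filter_nonneg_of_eq_zero (f := fun j => Dmap (fun l => p l (v l)) (p i j)) (Dmap_self _ i),
    card_filter_nonneg_of_eq_zero (f := fun j => Dmap (fun l => p l (w l)) (p i j)) (Dmap_self _ i),
    ← hw, ← hv]
  rcases mul_neg_iff.mp hlt with h | h <;> rcases hα i with hα | hα <;>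
    simp [hα, h.1.le, h.2.le, not_le.mpr h.1, not_le.mpr h.2]

theorem twoPoint_tangent_cube_uso_general {d : ℕ}
    (p : Fin d → Bool → (Fin d → ℝ))
    (hws : WellSeparated fun i => ({p i false, p i true} : Set (Fin d → ℝ)))
    (hgp : ∀ (v : Fin d → Bool) (i : Fin d),
      Dmap (fun j => p j (v j)) (p i (!v i)) ≠ 0)
    (α : Fin d → ℕ) (hα : ∀ i, α i = 1 ∨ α i = 2) :
    ∀ a b : Fin d → Bool, (∀ i, a i ≤ b i) →
      ∃! v : Fin d → Bool,
        (∀ i, a i ≤ v i ∧ v i ≤ b i) ∧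
        ∀ i, a i ≠ b i →
          (Finset.univ.filter fun j : Bool =>
            0 ≤ Dmap (fun l => p l (v l)) (p i j)).card = α i := by
  intro a b hab
  simpa only [decide_eq_true_eq] using
    (isUSO_card_filter_nonneg_Dmap_eq hws hgp hα).existsUnique_sink hab

/-- Given well-separated two-point sets `P i = {p i false, p i true}` in general
position and `α i ∈ {1, 2}`, the orientation `O` of the `d`-cube with
`O(v) i = 0 ↔ #{j : D_v (p i j) ≥ 0} = α i` is a unique sink orientation: every
subcube (given by `a ≤ b`) has exactly one vertex whose edges inside the subcube
are all incoming. -/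
theorem twoPoint_tangent_cube_uso {d : ℕ} (hd : 1 ≤ d)
    (p : Fin d → Bool → (Fin d → ℝ))
    (hws : WellSeparated fun i => ({p i false, p i true} : Set (Fin d → ℝ)))
    (hgp : ∀ (v : Fin d → Bool) (i : Fin d),
      Dmap (fun j => p j (v j)) (p i (!v i)) ≠ 0)
    (α : Fin d → ℕ) (hα : ∀ i, α i = 1 ∨ α i = 2) :
    ∀ a b : Fin d → Bool, (∀ i, a i ≤ b i) →
      ∃! v : Fin d → Bool,
        (∀ i, a i ≤ v i ∧ v i ≤ b i) ∧
        ∀ i, a i ≠ b i →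
          (Finset.univ.filter fun j : Bool =>
            0 ≤ Dmap (fun l => p l (v l)) (p i j)).card = α i :=
  twoPoint_tangent_cube_uso_general p hws hgp α hα
end

section
/- Let d ≥ 1 and for each i ∈ {1,…,d} let P_i ⊂ ℝ^d be a nonempty finite point set. Assume the sets P_1,…,P_d are well-separated, and assume general position in the sense that for every colorful selection p = (p_1,…,p_d) with p_i ∈ P_i and every point q ∈ P_j \ {p_j} (any j), D_p(q) ≠ 0. Let α_1,…,α_d be integers with α_i ∈ {1, |P_i|} for all i. Consider the grid whose vertices are the colorful selections v = (v_1,…,v_d) with v_i ∈ P_i, with two vertices adjacent iff they differ in exactly one coordinate, and define an orientation σ as follows: for an edge from v to w where w is obtained from v by replacing v_i by p ∈ P_i \ {v_i}, set σ(v, w) := 0 if either (α_i = 1 and D_v(p) < 0) or (α_i = |P_i| and D_v(p) > 0), and σ(v, w) := 1 otherwise. Then σ is a grid unique sink orientation: for every choice of nonempty subsets Q_i ⊆ P_i (i = 1,…,d), there is exactly one vertex v with v_i ∈ Q_i for all i such that σ(v, w) = 0 for every vertex w of the induced subgrid adjacent to v. -/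
/-!
A vertex `v` is a sink of the subgrid `Q` iff, for every colour `i`, the hyperplane `H_v`
spanned by `v` has all of `Q i \ {v i}` strictly on the side prescribed by `α i`.

Uniqueness: if `v ≠ w` were two sinks, pick `z` with `D_v z` and `D_w z` of opposite signs and
turn `H_v` into `H_w` through the pencil `(1 - t) D_v - t D_w`, letting each `v i` slide along a
segment inside `conv P i` so that it stays on the moving hyperplane; then slide the resulting
points to `w` inside `H_w`. Well-separation makes any `d` points taken from the hulls affinely
independent, so `D_y z` vanishes only if `z` lies on the hyperplane spanned by `y`, which never
happens along the way. Hence `D_y z` keeps its sign, contradicting the choice of `z`.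

Existence is by induction on the grid: remove a point `q₀` of some colour `j`; either the sink of
the smaller grid is still a sink, or the same sliding argument shows that the sink of the grid
whose colour `j` is restricted to `{q₀}` is one.
-/

open scoped Matrix

open Set Function

theorem mul_pos_of_continuousOn_Icc {f : ℝ → ℝ} {a b : ℝ} (hab : a ≤ b)
    (hf : ContinuousOn f (Icc a b)) (h0 : ∀ t ∈ Icc a b, f t ≠ 0) : 0 < f a * f b := by
  by_contra hneg
  have h0mem : (0 : ℝ) ∈ uIcc (f a) (f b) := by
    rcases mul_nonpos_iff.1 (not_lt.1 hneg) with h | h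
    · exact mem_uIcc.2 (Or.inr ⟨h.2, h.1⟩)
    · exact mem_uIcc.2 (Or.inl h)
  rw [← uIcc_of_le hab] at hf h0
  obtain ⟨t, ht, hft⟩ := intermediate_value_uIcc hf h0mem
  exact h0 t ht hft

theorem AffineMap.exists_mul_neg {E : Type*} [AddCommGroup E] [Module ℝ E]
    (f g : E →ᵃ[ℝ] ℝ) {p r : E} (hfp : f p = 0) (hgp : g p ≠ 0) (hfr : f r ≠ 0) :
    ∃ z, f z * g z < 0 := by
  -- `z` lies on the line from `p` to `r`, so close to `p` that `g z` keeps the sign of `g p`,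
  -- and on the side of `p` where `f` has the opposite sign.
  set y := f r * (g r - g p)
  set t := 1 / (1 + y ^ 2)
  refine ⟨lineMap p r (-(f r * g p) * t), ?_⟩
  have ht : 0 < t := by positivity
  have hty : t * y < 1 := by
    rw [one_div_mul_eq_div, div_lt_one (by positivity)]
    nlinarith [sq_nonneg (y - 1)]
  have hab : 0 < (f r * g p) ^ 2 := by positivity
  rw [f.apply_lineMap, g.apply_lineMap, hfp, lineMap_apply_ring', lineMap_apply_ring']
  calc _ = -((f r * g p) ^ 2 * t * (1 - t * y)) := by ring
    _ < 0 := neg_neg_of_pos (by have := sub_pos.2 hty; positivity)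

variable {d : ℕ}

theorem dmap_self (p : Fin d → Fin d → ℝ) (i : Fin d) : Dmap p (p i) = 0 :=
  Matrix.det_eq_zero_of_row_eq_zero i fun _ => sub_self _

theorem continuous_dmap (z : Fin d → ℝ) : Continuous fun p : Fin d → Fin d → ℝ => Dmap p z :=
  (continuous_matrix fun i j =>
    ((continuous_apply j).comp (continuous_apply i)).sub continuous_const).matrix_det

theorem dmap_eq_det_updateRow {n : ℕ} (p : Fin (n + 1) → Fin (n + 1) → ℝ)
    (x : Fin (n + 1) → ℝ) :
    Dmap p x = (Matrix.updateRow (Matrix.of fun i j => p i j - p 0 j) 0 (p 0 - x)).det := by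
  refine Matrix.det_eq_of_forall_row_eq_smul_add_const (fun i => if i = 0 then 0 else 1) 0
    (if_pos rfl) fun i j => ?_
  rcases eq_or_ne i 0 with rfl | hi
  · simp
  · simp [hi]

/-- For `d = n + 1`, subtracting row `0` from the other rows shows that `D_p x` is a linear
function of `p 0 - x`. -/
noncomputable def dmapAffineMap : {d : ℕ} → (Fin d → Fin d → ℝ) → (Fin d → ℝ) →ᵃ[ℝ] ℝ
  | 0, _ => AffineMap.const ℝ _ 1
  | _ + 1, p =>
    ((Matrix.detRowAlternating.toMultilinearMap.toLinearMap
      (Matrix.of fun i j => p i j - p 0 j) 0).toAffineMap).comp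
      (AffineMap.const ℝ _ (p 0) - AffineMap.id ℝ _)

@[simp]
theorem coe_dmapAffineMap (p : Fin d → Fin d → ℝ) : ⇑(dmapAffineMap p) = Dmap p := by
  funext x
  cases d with
  | zero => simp [dmapAffineMap, Dmap]
  | succ n =>
    rw [dmap_eq_det_updateRow]
    rfl

theorem AffineIndependent.mem_affineSpan_of_dmap_eq_zero {y : Fin d → Fin d → ℝ}
    (hy : AffineIndependent ℝ y) {z : Fin d → ℝ} (h : Dmap y z = 0) :
    z ∈ affineSpan ℝ (range y) := by
  obtain ⟨g, hg0, hg⟩ := Matrix.exists_vecMul_eq_zero_iff.2 h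
  have hrel : ∑ i, g i • y i = (∑ i, g i) • z := by
    ext j
    have := congr_fun hg j
    simp only [Matrix.vecMul, dotProduct, Matrix.of_apply, mul_sub, Finset.sum_sub_distrib,
      ← Finset.sum_mul, Pi.zero_apply, sub_eq_zero] at this
    simpa [Finset.sum_apply] using this
  have hS : ∑ i, g i ≠ 0 := fun hS => hg0 <| funext fun i =>
    affineIndependent_iff.1 hy Finset.univ g hS (by rw [hrel, hS, zero_smul]) i
      (Finset.mem_univ i)
  have hw : ∑ i, (∑ k, g k)⁻¹ * g i = 1 := by rw [← Finset.mul_sum, inv_mul_cancel₀ hS]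
  convert affineCombination_mem_affineSpan hw y
  rw [Finset.affineCombination_eq_linear_combination _ _ _ hw]
  simp_rw [mul_smul, ← Finset.smul_sum, hrel, smul_smul, inv_mul_cancel₀ hS, one_smul]

variable {P : Fin d → Set (Fin d → ℝ)}

theorem WellSeparated.affineIndependent_s16 (hws : WellSeparated P) {y : Fin d → Fin d → ℝ}
    (hy : ∀ i, y i ∈ convexHull ℝ (P i)) : AffineIndependent ℝ y := by
  by_contra hdep
  obtain ⟨n, rfl⟩ : ∃ n, d = n + 2 := by
    refine ⟨d - 2, ?_⟩
    by_contra hd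
    have : Subsingleton (Fin d) := Fin.subsingleton_iff_le_one.2 (by omega)
    exact hdep (affineIndependent_of_subsingleton ℝ y)
  refine hws ⟨affineSpan ℝ (range y), ?_, fun i => ⟨y i, mem_affineSpan ℝ ⟨i, rfl⟩, hy i⟩⟩
  rw [direction_affineSpan]
  have := (finrank_vectorSpan_le_iff_not_affineIndependent ℝ y (n := n) (by simp)).2 hdep
  push_cast
  omega

theorem WellSeparated.dmap_ne_zero (hws : WellSeparated P) {y : Fin d → Fin d → ℝ}
    (hy : ∀ i, y i ∈ convexHull ℝ (P i)) {f : (Fin d → ℝ) →ᵃ[ℝ] ℝ} (hf : ∀ i, f (y i) = 0)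
    {z : Fin d → ℝ} (hfz : f z ≠ 0) : Dmap y z ≠ 0 := fun h =>
  hfz <| AffineMap.eqOn_affineSpan (g := AffineMap.const ℝ _ 0)
    (by rintro _ ⟨i, rfl⟩; exact hf i) ((hws.affineIndependent_s16 hy).mem_affineSpan_of_dmap_eq_zero h)

theorem WellSeparated.dmap_mul_dmap_pos (hws : WellSeparated P) {y : ℝ → Fin d → Fin d → ℝ}
    {z : Fin d → ℝ} (hy : ContinuousOn y (Icc 0 1))
    (hmem : ∀ t ∈ Icc (0 : ℝ) 1, ∀ i, y t i ∈ convexHull ℝ (P i))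
    (hsep : ∀ t ∈ Icc (0 : ℝ) 1,
      ∃ f : (Fin d → ℝ) →ᵃ[ℝ] ℝ, (∀ i, f (y t i) = 0) ∧ f z ≠ 0) :
    0 < Dmap (y 0) z * Dmap (y 1) z :=
  mul_pos_of_continuousOn_Icc zero_le_one ((continuous_dmap z).comp_continuousOn hy)
    fun t ht => by
      obtain ⟨f, hf, hfz⟩ := hsep t ht
      exact hws.dmap_ne_zero (hmem t ht) hf hfz

def PencilPath (P : Fin d → Set (Fin d → ℝ)) (v w : Fin d → Fin d → ℝ) (i : Fin d) : Prop :=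
  ∃ x : ℝ → Fin d → ℝ, ContinuousOn x (Icc 0 1) ∧ x 0 = v i ∧
    ∀ t ∈ Icc (0 : ℝ) 1,
      x t ∈ convexHull ℝ (P i) ∧ (1 - t) * Dmap v (x t) = t * Dmap w (x t)

theorem pencilPath_of_eq {v w : Fin d → Fin d → ℝ} {i : Fin d}
    (hv : v i ∈ convexHull ℝ (P i)) (h : v i = w i) : PencilPath P v w i :=
  ⟨fun _ => v i, continuousOn_const, rfl,
    fun _ _ => ⟨hv, by rw [dmap_self, h, dmap_self, mul_zero, mul_zero]⟩⟩

theorem pencilPath_of_segment {v w : Fin d → Fin d → ℝ} {i : Fin d} {u : Fin d → ℝ}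
    (hv : v i ∈ convexHull ℝ (P i)) (hu : u ∈ convexHull ℝ (P i)) {s : ℝ}
    (h₁ : 0 ≤ s * Dmap w (v i)) (h₂ : 0 < s * Dmap v u) (h₃ : s * Dmap w u ≤ 0)
    (h₄ : 0 < s * (Dmap w (v i) - Dmap w u)) : PencilPath P v w i := by
  have hden : ∀ t ∈ Icc (0 : ℝ) 1,
      0 < (1 - t) * (s * Dmap v u) + t * (s * (Dmap w (v i) - Dmap w u)) := by
    rintro t ⟨ht₀, ht₁⟩
    rcases ht₁.lt_or_eq with ht₁ | rfl
    · nlinarith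
    · linarith
  -- `r t` is where the segment from `v i` to `u` meets the zero set of `(1 - t) D_v - t D_w`.
  set r : ℝ → ℝ := fun t =>
    t * (s * Dmap w (v i)) / ((1 - t) * (s * Dmap v u) + t * (s * (Dmap w (v i) - Dmap w u)))
  refine ⟨fun t => AffineMap.lineMap (v i) u (r t), ?_, by simp [r], fun t ht => ⟨?_, ?_⟩⟩
  · exact continuousOn_const.lineMap continuousOn_const
      (ContinuousOn.div (by fun_prop) (by fun_prop) fun t ht => (hden t ht).ne')
  · refine (convex_convexHull ℝ _).lineMap_mem hv hu
      ⟨div_nonneg (mul_nonneg ht.1 h₁) (hden t ht).le, div_le_one_of_le₀ ?_ (hden t ht).le⟩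
    nlinarith [ht.1, ht.2]
  · have hs : s ≠ 0 := left_ne_zero_of_mul h₂.ne'
    have hr : r t * ((1 - t) * (s * Dmap v u) + t * (s * (Dmap w (v i) - Dmap w u)))
        = t * (s * Dmap w (v i)) := div_mul_cancel₀ _ (hden t ht).ne'
    simp only [← coe_dmapAffineMap, AffineMap.apply_lineMap]
    simp only [coe_dmapAffineMap, dmap_self, AffineMap.lineMap_apply_ring']
    refine mul_left_cancel₀ hs ?_
    linear_combination hr

theorem WellSeparated.false_of_pencilPath (hws : WellSeparated P) {v w : Fin d → Fin d → ℝ}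
    (hw : ∀ i, w i ∈ convexHull ℝ (P i)) (hpath : ∀ i, PencilPath P v w i) {j : Fin d}
    (hwv : Dmap w (v j) ≠ 0) (hvw : Dmap v (w j) ≠ 0) : False := by
  obtain ⟨z, hz⟩ := AffineMap.exists_mul_neg (dmapAffineMap v) (dmapAffineMap w)
    (p := v j) (r := w j) (by simp [dmap_self]) (by simpa using hwv) (by simpa using hvw)
  simp only [coe_dmapAffineMap] at hz
  choose x hxc hx0 hx using hpath
  have hx1 : ∀ i, Dmap w (x i 1) = 0 := fun i => by
    simpa using (hx i 1 (right_mem_Icc.2 zero_le_one)).2.symm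
  have hrotate : 0 < Dmap v z * Dmap (fun i => x i 1) z := by
    have := hws.dmap_mul_dmap_pos (y := fun t i => x i t) (z := z) (continuousOn_pi.2 hxc)
      (fun t ht i => (hx i t ht).1) fun t ht =>
        ⟨(1 - t) • dmapAffineMap v - t • dmapAffineMap w,
          fun i => by simp [(hx i t ht).2], by
            simp only [AffineMap.coe_sub, AffineMap.coe_smul, Pi.sub_apply, Pi.smul_apply,
              coe_dmapAffineMap, smul_eq_mul]
            refine right_ne_zero_of_mul (a := Dmap v z) (ne_of_gt ?_)
            rcases ht.2.lt_or_eq with ht₁ | rfl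
            · have := mul_pos (sub_pos.2 ht₁) (mul_self_pos.2 (left_ne_zero_of_mul hz.ne))
              nlinarith [ht.1]
            · linarith⟩
    simpa [funext hx0] using this
  have hslide : 0 < Dmap (fun i => x i 1) z * Dmap w z := by
    have := hws.dmap_mul_dmap_pos (y := fun s i => AffineMap.lineMap (x i 1) (w i) s) (z := z)
      (continuousOn_pi.2 fun i => continuousOn_const.lineMap continuousOn_const continuousOn_id)
      (fun s hs i => (convex_convexHull ℝ _).lineMap_mem
        (hx i 1 (right_mem_Icc.2 zero_le_one)).1 (hw i) hs)
      fun s _ => ⟨dmapAffineMap w, fun i => by simp [AffineMap.apply_lineMap, hx1, dmap_self],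
        by simpa using right_ne_zero_of_mul hz.ne⟩
    simpa using this
  nlinarith [mul_pos hrotate hslide,
    mul_nonneg (mul_self_nonneg (Dmap (fun i => x i 1) z)) (neg_nonneg.2 hz.le)]

def GeneralPosition (P : Fin d → Set (Fin d → ℝ)) : Prop :=
  ∀ p : Fin d → (Fin d → ℝ), (∀ i, p i ∈ P i) →
    ∀ j : Fin d, ∀ q ∈ P j, q ≠ p j → Dmap p q ≠ 0

/-- The sign `e` encodes `α`: `e = -1` for `α = 1` and `e = 1` for `α = |P i|`. -/
def IsSinkAt (e : ℝ) (S : Set (Fin d → ℝ)) (v : Fin d → Fin d → ℝ) (i : Fin d) : Prop :=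
  v i ∈ S ∧ ∀ q ∈ S, q ≠ v i → 0 < e * Dmap v q

def IsSink (ε : Fin d → ℝ) (Q : Fin d → Set (Fin d → ℝ)) (v : Fin d → Fin d → ℝ) : Prop :=
  ∀ i, IsSinkAt (ε i) (Q i) v i

section Sinks

variable {ε : Fin d → ℝ} {Q : Fin d → Set (Fin d → ℝ)} {v w : Fin d → Fin d → ℝ}

theorem IsSinkAt.dmap_ne_zero {e : ℝ} {S : Set (Fin d → ℝ)} {i : Fin d} {q : Fin d → ℝ}
    (h : IsSinkAt e S v i) (hq : q ∈ S) (hqv : q ≠ v i) : Dmap v q ≠ 0 :=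
  right_ne_zero_of_mul (h.2 q hq hqv).ne'

theorem pencilPath_of_isSinkAt {e : ℝ} {S : Set (Fin d → ℝ)} {i : Fin d} (hS : S ⊆ P i)
    (hv : IsSinkAt e S v i) (hw : IsSinkAt e S w i) : PencilPath P v w i := by
  have hconv : S ⊆ convexHull ℝ (P i) := hS.trans (subset_convexHull ℝ _)
  by_cases h : v i = w i
  · exact pencilPath_of_eq (hconv hv.1) h
  · exact pencilPath_of_segment (hconv hv.1) (hconv hw.1) (hw.2 _ hv.1 h).le
      (hv.2 _ hw.1 (Ne.symm h)) (by rw [dmap_self, mul_zero])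
      (by rw [dmap_self, sub_zero]; exact hw.2 _ hv.1 h)

theorem IsSink.eq (hws : WellSeparated P) (hQP : ∀ i, Q i ⊆ P i) (hv : IsSink ε Q v)
    (hw : IsSink ε Q w) : v = w := by
  by_contra hne
  obtain ⟨j, hj⟩ := Function.ne_iff.1 hne
  exact hws.false_of_pencilPath (fun i => subset_convexHull ℝ _ (hQP i (hw i).1))
    (fun i => pencilPath_of_isSinkAt (hQP i) (hv i) (hw i))
    ((hw j).dmap_ne_zero (hv j).1 hj) ((hv j).dmap_ne_zero (hw j).1 (Ne.symm hj))

variable {j : Fin d} {S : Set (Fin d → ℝ)}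

theorem IsSink.mem_of_update (hv : IsSink ε (update Q j S) v) (hS : S ⊆ Q j) (i : Fin d) :
    v i ∈ Q i :=
  (update_le_self_iff.2 hS : update Q j S ≤ Q) i (hv i).1

theorem IsSink.mem_update_self (hv : IsSink ε (update Q j S) v) : v j ∈ S := by
  simpa using (hv j).1

theorem IsSink.of_update_sdiff {q₀ : Fin d → ℝ} (hv : IsSink ε (update Q j (Q j \ {q₀})) v)
    (hq₀ : q₀ ∈ Q j) (hpos : 0 < ε j * Dmap v q₀) : IsSink ε Q v := by
  intro i
  rcases ne_or_eq i j with hij | rfl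
  · simpa [update_of_ne hij] using hv i
  have hvi := hv i
  rw [update_self] at hvi
  refine ⟨hvi.1.1, fun q hq hqv => ?_⟩
  rcases eq_or_ne q q₀ with rfl | hqq₀
  · exact hpos
  · exact hvi.2 q ⟨hq, hqq₀⟩ hqv

/-- If adding `q₀` back to the `j`-th colour destroys the sink `v`, then the sink `w` of the
subgrid with `j`-th colour `{q₀}` is a sink of the whole grid: otherwise a point `q` of colour `j`
lies on the wrong side of `H_w`, and sliding `v j` towards `q₀` or `q` gives pencil paths that
well-separation rules out. -/
theorem IsSink.of_update_singleton (hws : WellSeparated P) (hgp : GeneralPosition P)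
    (hQP : ∀ i, Q i ⊆ P i) (hε : ε j ≠ 0) {q₀ : Fin d → ℝ} (hq₀ : q₀ ∈ Q j)
    (hv : IsSink ε (update Q j (Q j \ {q₀})) v) (hvq₀ : ε j * Dmap v q₀ < 0)
    (hw : IsSink ε (update Q j {q₀}) w) : IsSink ε Q w := by
  have hvQ := hv.mem_of_update sdiff_subset
  have hwQ := hw.mem_of_update (singleton_subset_iff.2 hq₀)
  have hvj : v j ≠ q₀ := hv.mem_update_self.2
  have hwj : w j = q₀ := hw.mem_update_self
  have hconv : ∀ k, Q k ⊆ convexHull ℝ (P k) := fun k => (hQP k).trans (subset_convexHull ℝ _)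
  intro i
  rcases ne_or_eq i j with hij | rfl
  · simpa [update_of_ne hij] using hw i
  refine ⟨hwQ i, fun q hq hqw => ?_⟩
  by_contra hbad
  have hwP : ∀ k, w k ∈ P k := fun k => hQP k (hwQ k)
  have hwq : ε i * Dmap w q < 0 :=
    (not_lt.1 hbad).lt_of_ne (mul_ne_zero hε (hgp w hwP i q (hQP i hq) hqw))
  have hwv : Dmap w (v i) ≠ 0 := hgp w hwP i (v i) (hQP i (hvQ i)) (hwj ▸ hvj)
  refine hws.false_of_pencilPath (fun k => hconv k (hwQ k)) (fun k => ?_) hwv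
    (hwj ▸ right_ne_zero_of_mul hvq₀.ne)
  rcases ne_or_eq k i with hki | rfl
  · exact pencilPath_of_isSinkAt (hQP k) (by simpa [update_of_ne hki] using hv k)
      (by simpa [update_of_ne hki] using hw k)
  rcases (mul_ne_zero hε hwv).lt_or_gt with hneg | hpos
  · refine pencilPath_of_segment (s := -ε k) (hconv k (hvQ k)) (hconv k hq₀) (by linarith)
      (by linarith) (by rw [← hwj, dmap_self, mul_zero]) (by rw [← hwj, dmap_self]; linarith)
  · have hqv : q ≠ v k := fun h => by rw [h] at hwq; linarith
    have hvq : 0 < ε k * Dmap v q := by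
      have := (hv k).2 q
      rw [update_self] at this
      exact this ⟨hq, hwj ▸ hqw⟩ hqv
    exact pencilPath_of_segment (hconv k (hvQ k)) (hconv k hq) hpos.le hvq hwq.le
      (by rw [mul_sub]; linarith)

end Sinks

theorem sum_ncard_update_lt {ι α : Type*} [Fintype ι] [DecidableEq ι] {Q : ι → Set α}
    {j : ι} {S : Set α} (h : S.ncard < (Q j).ncard) :
    ∑ i, (update Q j S i).ncard < ∑ i, (Q i).ncard := by
  refine Finset.sum_lt_sum (fun i _ => ?_) ⟨j, Finset.mem_univ j, by simpa using h⟩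
  rcases eq_or_ne i j with rfl | hij
  · simpa using h.le
  · simp [update_of_ne hij]

theorem exists_isSink (hws : WellSeparated P) (hgp : GeneralPosition P)
    (hfin : ∀ i, (P i).Finite) {ε : Fin d → ℝ} (hε : ∀ i, ε i ≠ 0)
    {Q : Fin d → Set (Fin d → ℝ)} (hQP : ∀ i, Q i ⊆ P i) (hQne : ∀ i, (Q i).Nonempty) :
    ∃ v, IsSink ε Q v := by
  induction hN : ∑ i, (Q i).ncard using Nat.strong_induction_on generalizing Q with
  | _ N ih =>
  by_cases hnt : ∃ j, (Q j).Nontrivial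
  swap
  · simp only [not_exists, not_nontrivial_iff] at hnt
    choose a ha using hQne
    exact ⟨a, fun i => ⟨ha i, fun q hq hqa => (hqa (hnt i hq (ha i))).elim⟩⟩
  obtain ⟨j, q₀, hq₀, q₁, hq₁, hq₁₀⟩ := hnt
  have hfinj := (hfin j).subset (hQP j)
  have hsmaller : ∀ S ⊆ Q j, S.Nonempty → S.ncard < (Q j).ncard →
      ∃ v, IsSink ε (update Q j S) v := fun S hS hSne hlt =>
    ih _ (hN ▸ sum_ncard_update_lt hlt)
      ((forall_update_iff Q fun i T => T ⊆ P i).2 ⟨hS.trans (hQP j), fun i _ => hQP i⟩)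
      ((forall_update_iff Q fun _ T => T.Nonempty).2 ⟨hSne, fun i _ => hQne i⟩) rfl
  obtain ⟨v, hv⟩ := hsmaller (Q j \ {q₀}) sdiff_subset ⟨q₁, hq₁, hq₁₀.symm⟩
    (ncard_sdiff_singleton_lt_of_mem hq₀ hfinj)
  obtain ⟨w, hw⟩ := hsmaller {q₀} (singleton_subset_iff.2 hq₀) (singleton_nonempty q₀)
    (by rw [ncard_singleton]; exact (one_lt_ncard_iff hfinj).2 ⟨q₀, q₁, hq₀, hq₁, hq₁₀⟩)
  have hvP : ∀ i, v i ∈ P i := fun i => hQP i (hv.mem_of_update sdiff_subset i)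
  rcases (mul_ne_zero (hε j)
      (hgp v hvP j q₀ (hQP j hq₀) (Ne.symm hv.mem_update_self.2))).lt_or_gt with hneg | hpos
  · exact ⟨w, IsSink.of_update_singleton hws hgp hQP (hε j) hq₀ hv hneg hw⟩
  · exact ⟨v, hv.of_update_sdiff hq₀ hpos⟩

theorem tangent_condition_iff {α n : ℕ} {D : ℝ} (hα : α = 1 ∨ α = n) (hn : 1 < n) :
    ((α = 1 ∧ D < 0) ∨ (α = n ∧ 0 < D)) ↔ 0 < (if α = 1 then -1 else 1) * D := by
  rcases hα with rfl | rfl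
  · simp [hn.ne]
  · simp [hn.ne']

theorem tangent_grid_uso_general {d : ℕ}
    (P : Fin d → Set (Fin d → ℝ))
    (hfin : ∀ i, (P i).Finite)
    (hws : WellSeparated P)
    (hgp : ∀ p : Fin d → (Fin d → ℝ), (∀ i, p i ∈ P i) →
      ∀ j : Fin d, ∀ q ∈ P j, q ≠ p j → Dmap p q ≠ 0)
    (α : Fin d → ℕ) (hα : ∀ i, α i = 1 ∨ α i = (P i).ncard) :
    ∀ Q : Fin d → Set (Fin d → ℝ), (∀ i, Q i ⊆ P i) → (∀ i, (Q i).Nonempty) →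
      ∃! v : Fin d → (Fin d → ℝ),
        (∀ i, v i ∈ Q i) ∧
        ∀ i : Fin d, ∀ q ∈ Q i, q ≠ v i →
          ((α i = 1 ∧ Dmap v q < 0) ∨ (α i = (P i).ncard ∧ 0 < Dmap v q)) := by
  intro Q hQP hQne
  set ε : Fin d → ℝ := fun i => if α i = 1 then -1 else 1
  have hε : ∀ i, ε i ≠ 0 := fun i => by simp only [ε]; split_ifs <;> norm_num
  obtain ⟨v, hv⟩ := exists_isSink hws hgp hfin hε hQP hQne
  refine (existsUnique_congr fun u => ?_).2 ⟨v, hv, fun u hu => hu.eq hws hQP hv⟩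
  simp only [IsSink, IsSinkAt, forall_and]
  refine and_congr_right fun hu =>
    forall₄_congr fun i q hq hqu => tangent_condition_iff (hα i) ?_
  exact (one_lt_ncard_iff (hfin i)).2 ⟨q, u i, hQP i hq, hQP i (hu i), hqu⟩

/-- Given well-separated finite point sets in general position and
`α i ∈ {1, |P i|}`, the grid orientation on colorful selections (an edge from `v` to
`v[i ↦ q]` is incoming at `v` iff `α i = 1 ∧ D_v q < 0` or `α i = |P i| ∧ D_v q > 0`)
is a grid unique sink orientation: every induced subgrid `Q i ⊆ P i` has exactly one
vertex all of whose subgrid edges are incoming. -/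
theorem tangent_grid_uso {d : ℕ} (hd : 1 ≤ d)
    (P : Fin d → Set (Fin d → ℝ))
    (hfin : ∀ i, (P i).Finite) (hne : ∀ i, (P i).Nonempty)
    (hws : WellSeparated P)
    (hgp : ∀ p : Fin d → (Fin d → ℝ), (∀ i, p i ∈ P i) →
      ∀ j : Fin d, ∀ q ∈ P j, q ≠ p j → Dmap p q ≠ 0)
    (α : Fin d → ℕ) (hα : ∀ i, α i = 1 ∨ α i = (P i).ncard) :
    ∀ Q : Fin d → Set (Fin d → ℝ), (∀ i, Q i ⊆ P i) → (∀ i, (Q i).Nonempty) →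
      ∃! v : Fin d → (Fin d → ℝ),
        (∀ i, v i ∈ Q i) ∧
        ∀ i : Fin d, ∀ q ∈ Q i, q ≠ v i →
          ((α i = 1 ∧ Dmap v q < 0) ∨ (α i = (P i).ncard ∧ 0 < Dmap v q)) :=
  tangent_grid_uso_general P hfin hws hgp α hα
end
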